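/- For a radial kernel $k(x,y) = \Psi(\|x-y\|^2)$ with $\Psi$ four times differentiable, the Stein kernel $k_0(x,y) = \Delta_x\Delta_y k + u(x)^\top\nabla_x\Delta_y k + u(y)^\top\nabla_y\Delta_x k + u(x)^\top[\nabla_x\nabla_y^\top k]u(y)$ equals, with $z=\|x-y\|^2$: $16z^2\Psi^{(4)}(z) + 16(2+d)z\Psi'''(z) + 4(2+d)d\Psi''(z) + 4[2z\Psi'''(z)+(2+d)\Psi''(z)](u(x)-u(y))^\top(x-y) - 4\Psi''(z)\, u(x)^\top(x-y)(x-y)^\top u(y) - 2\Psi'(z)\, u(x)^\top u(y)$. -/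

import Mathlib

noncomputable def lap (d : ℕ) (f : EuclideanSpace ℝ (Fin d) → ℝ)
    (x : EuclideanSpace ℝ (Fin d)) : ℝ :=
  ∑ i, fderiv ℝ (fun y => fderiv ℝ f y (EuclideanSpace.single i 1)) x
    (EuclideanSpace.single i 1)

/-- `Δ_y k(x,y)` for the radial kernel `k(x,y) = Ψ(‖x-y‖²)`. -/
noncomputable def lapYrad (d : ℕ) (Ψ : ℝ → ℝ)
    (x y : EuclideanSpace ℝ (Fin d)) : ℝ :=
  ∑ j, fderiv ℝ (fun y' => fderiv ℝ (fun y'' => Ψ (‖x - y''‖ ^ 2)) y'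
      (EuclideanSpace.single j 1)) y (EuclideanSpace.single j 1)

/-- `Δ_x k(x,y)` for the radial kernel `k(x,y) = Ψ(‖x-y‖²)`. -/
noncomputable def lapXrad (d : ℕ) (Ψ : ℝ → ℝ)
    (x y : EuclideanSpace ℝ (Fin d)) : ℝ :=
  lap d (fun x' => Ψ (‖x' - y‖ ^ 2)) x

/-- `∂_{x_i}∂_{y_j} k(x,y)` for the radial kernel. -/
noncomputable def mixedRad (d : ℕ) (Ψ : ℝ → ℝ)
    (x y : EuclideanSpace ℝ (Fin d)) (i j : Fin d) : ℝ :=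
  fderiv ℝ (fun x' => fderiv ℝ (fun y' => Ψ (‖x' - y'‖ ^ 2)) y
    (EuclideanSpace.single j 1)) x (EuclideanSpace.single i 1)

/-! For a radial function `t ↦ G (‖t - c‖ ^ 2)` the chain rule gives the gradient
`2 G'(r) (t - c)` and the Hessian `4 G''(r) (t - c)(t - c)ᵀ + 2 G'(r) I`, with `r = ‖t - c‖ ^ 2`.
Hence its Laplacian is again radial, with profile `4 r G''(r) + 2 d G'(r)`, and since `k`
depends on `x - y` only, `∂ₓ∂_y k = -∂ₓ∂ₓ k`. Applying the Laplacian formula twice yields the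
fourth-order terms of `k₀`, the gradient formula the terms linear in `u`, and the Hessian formula
the bilinear term. -/

open scoped RealInnerProductSpace

section Radial

variable {E : Type*} [NormedAddCommGroup E] [InnerProductSpace ℝ E] {G : ℝ → ℝ}

theorem hasFDerivAt_radial (c : E) {x : E} (hG : DifferentiableAt ℝ G (‖x - c‖ ^ 2)) :
    HasFDerivAt (fun t => G (‖t - c‖ ^ 2)) ((2 * deriv G (‖x - c‖ ^ 2)) • innerSL ℝ (x - c)) x := by
  refine (hG.hasDerivAt.comp_hasFDerivAt x ((hasFDerivAt_id x).sub_const c).norm_sq).congr_fderiv ?_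
  ext v
  simp only [id_eq, map_sub, ContinuousLinearMap.comp_id, smul_apply, sub_apply,
    coe_innerSL_apply, nsmul_eq_mul, Nat.cast_ofNat, smul_eq_mul]
  ring

theorem fderiv_radial_apply (c : E) (hG : Differentiable ℝ G) (x v : E) :
    fderiv ℝ (fun t => G (‖t - c‖ ^ 2)) x v = 2 * deriv G (‖x - c‖ ^ 2) * ⟪x - c, v⟫ := by
  simp [(hasFDerivAt_radial c (hG _)).fderiv, inner_sub_left, mul_assoc]

theorem gradient_radial [CompleteSpace E] (c : E) {x : E}
    (hG : DifferentiableAt ℝ G (‖x - c‖ ^ 2)) :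
    gradient (fun t => G (‖t - c‖ ^ 2)) x = (2 * deriv G (‖x - c‖ ^ 2)) • (x - c) := by
  refine (hasGradientAt_iff_hasFDerivAt.mpr ((hasFDerivAt_radial c hG).congr_fderiv ?_)).gradient
  ext v
  simp

theorem fderiv_fderiv_radial_apply (c : E) (hG : ContDiff ℝ 2 G) (x v w : E) :
    fderiv ℝ (fun t => fderiv ℝ (fun s => G (‖s - c‖ ^ 2)) t v) x w
      = 4 * deriv^[2] G (‖x - c‖ ^ 2) * ⟪x - c, v⟫ * ⟪x - c, w⟫
        + 2 * deriv G (‖x - c‖ ^ 2) * ⟪v, w⟫ := by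
  have hG₁ : Differentiable ℝ G := hG.differentiable (by norm_num)
  have hG₂ : Differentiable ℝ (deriv G) := (hG.iterate_deriv' 1 1).differentiable one_ne_zero
  have hfactor : HasFDerivAt (fun t => 2 * deriv G (‖t - c‖ ^ 2) * ⟪t - c, v⟫) _ x :=
    ((hasFDerivAt_radial c (hG₂ _)).const_mul 2).mul
      (((hasFDerivAt_id x).sub_const c).inner ℝ (hasFDerivAt_const v x))
  rw [funext fun t => fderiv_radial_apply c hG₁ t v, hfactor.fderiv]
  simp only [id_eq, inner_sub_left, add_apply, smul_apply, ContinuousLinearMap.comp_apply,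
    ContinuousLinearMap.prod_apply, ContinuousLinearMap.id_apply, zero_apply, fderivInnerCLM_apply,
    inner_zero_right, real_inner_comm v w, zero_add, smul_eq_mul, coe_innerSL_apply,
    Function.iterate_succ, Function.iterate_zero, Function.comp_apply]
  ring

end Radial

theorem deriv_const_mul_id_mul_add {f g : ℝ → ℝ} (a b : ℝ) (hf : Differentiable ℝ f)
    (hg : Differentiable ℝ g) :
    deriv (fun r => a * r * f r + b * g r)
      = fun r => a * r * deriv f r + (a * f r + b * deriv g r) := by
  funext r
  have h : HasDerivAt (fun r => a * r * f r + b * g r) _ r :=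
    (((hasDerivAt_id r).const_mul a).mul (hf r).hasDerivAt).add ((hg r).hasDerivAt.const_mul b)
  rw [h.deriv, id, mul_one]
  ring

section Euclidean

variable {d : ℕ}

noncomputable def radialLapProfile (d : ℕ) (G : ℝ → ℝ) (r : ℝ) : ℝ :=
  4 * r * deriv^[2] G r + 2 * d * deriv G r

theorem contDiff_radialLapProfile {n : ℕ} {G : ℝ → ℝ} (hG : ContDiff ℝ (n + 2 : ℕ) G) :
    ContDiff ℝ n (radialLapProfile d G) :=
  ((contDiff_const.mul contDiff_id).mul (hG.iterate_deriv' n 2)).add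
    (contDiff_const.mul ((hG.iterate_deriv' (n + 1) 1).of_le (by norm_cast; omega)))

theorem deriv_radialLapProfile {G : ℝ → ℝ} (hG : ContDiff ℝ 3 G) :
    deriv (radialLapProfile d G)
      = fun r => 4 * r * deriv^[3] G r + (4 + 2 * d) * deriv^[2] G r := by
  rw [show radialLapProfile d G = fun r => 4 * r * deriv^[2] G r + 2 * d * deriv^[1] G r from rfl,
    deriv_const_mul_id_mul_add _ _ ((hG.iterate_deriv' 1 2).differentiable one_ne_zero)
    ((hG.iterate_deriv' 2 1).differentiable two_ne_zero)]
  funext r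
  simp only [← Function.iterate_succ_apply' deriv]
  ring

theorem iterate_deriv_two_radialLapProfile {G : ℝ → ℝ} (hG : ContDiff ℝ 4 G) :
    deriv^[2] (radialLapProfile d G)
      = fun r => 4 * r * deriv^[4] G r + (8 + 2 * d) * deriv^[3] G r := by
  rw [Function.iterate_succ_apply', Function.iterate_one,
    deriv_radialLapProfile (hG.of_le (by norm_num)), deriv_const_mul_id_mul_add _ _
    ((hG.iterate_deriv' 1 3).differentiable one_ne_zero)
    ((hG.iterate_deriv' 2 2).differentiable two_ne_zero)]
  funext r
  simp only [← Function.iterate_succ_apply' deriv]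
  ring

theorem lap_radial {G : ℝ → ℝ} (hG : ContDiff ℝ 2 G) (c x : EuclideanSpace ℝ (Fin d)) :
    lap d (fun t => G (‖t - c‖ ^ 2)) x = radialLapProfile d G (‖x - c‖ ^ 2) := by
  have hnorm : ∑ i, (x - c) i * (x - c) i = ‖x - c‖ ^ 2 := by
    rw [EuclideanSpace.real_norm_sq_eq]; simp only [sq]
  simp only [lap, fderiv_fderiv_radial_apply c hG, EuclideanSpace.inner_single_right,
    PiLp.single_apply, one_mul, conj_trivial, if_true, mul_assoc,
    Finset.sum_add_distrib, ← Finset.mul_sum, hnorm, Finset.sum_const, Finset.card_univ,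
    Fintype.card_fin, nsmul_eq_mul, mul_one, radialLapProfile]
  ring

theorem lapYrad_eq {Ψ : ℝ → ℝ} (hΨ : ContDiff ℝ 2 Ψ) (x y : EuclideanSpace ℝ (Fin d)) :
    lapYrad d Ψ x y = radialLapProfile d Ψ (‖x - y‖ ^ 2) := by
  simp only [lapYrad, norm_sub_rev x]
  exact lap_radial hΨ x y

theorem lapXrad_eq {Ψ : ℝ → ℝ} (hΨ : ContDiff ℝ 2 Ψ) (x y : EuclideanSpace ℝ (Fin d)) :
    lapXrad d Ψ x y = radialLapProfile d Ψ (‖x - y‖ ^ 2) :=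
  lap_radial hΨ y x

theorem mixedRad_eq {Ψ : ℝ → ℝ} (hΨ : Differentiable ℝ Ψ) (x y : EuclideanSpace ℝ (Fin d))
    (i j : Fin d) :
    mixedRad d Ψ x y i j = -fderiv ℝ (fun t => fderiv ℝ (fun s => Ψ (‖s - y‖ ^ 2)) t
      (EuclideanSpace.single j 1)) x (EuclideanSpace.single i 1) := by
  have hswap : (fun x' => fderiv ℝ (fun y' => Ψ (‖x' - y'‖ ^ 2)) y (EuclideanSpace.single j 1))
      = fun x' => -fderiv ℝ (fun s => Ψ (‖s - y‖ ^ 2)) x' (EuclideanSpace.single j 1) := by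
    funext x'
    simp only [norm_sub_rev x', fderiv_radial_apply _ hΨ, ← neg_sub x' y, inner_neg_left]
    ring
  rw [mixedRad, hswap, fderiv_fun_neg, neg_apply]

theorem sum_sum_mul_mixedRad_mul {Ψ : ℝ → ℝ} (hΨ : ContDiff ℝ 2 Ψ)
    (a b x y : EuclideanSpace ℝ (Fin d)) :
    ∑ i, ∑ j, a i * mixedRad d Ψ x y i j * b j
      = -(4 * deriv^[2] Ψ (‖x - y‖ ^ 2) * ⟪a, x - y⟫ * ⟪x - y, b⟫
        + 2 * deriv Ψ (‖x - y‖ ^ 2) * ⟪a, b⟫) := by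
  simp only [mixedRad_eq (hΨ.differentiable two_ne_zero), fderiv_fderiv_radial_apply y hΨ,
    EuclideanSpace.inner_single_right, PiLp.single_apply, one_mul, conj_trivial]
  simp only [PiLp.inner_apply, RCLike.inner_apply, conj_trivial, mul_neg, neg_mul,
    Finset.sum_neg_distrib, mul_add, add_mul, Finset.sum_add_distrib, mul_ite, ite_mul, mul_one,
    mul_zero, zero_mul, Finset.sum_ite_eq, Finset.mem_univ, if_true, Finset.mul_sum, Finset.sum_mul]
  rw [Finset.sum_comm]
  congr 2
  · exact Finset.sum_congr rfl fun _ _ => Finset.sum_congr rfl fun _ _ => by ring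
  · exact Finset.sum_congr rfl fun _ _ => by ring

end Euclidean

theorem stmt4_general (d : ℕ) (Ψ : ℝ → ℝ) (hΨ : ContDiff ℝ 4 Ψ)
    (u : EuclideanSpace ℝ (Fin d) → EuclideanSpace ℝ (Fin d))
    (x y : EuclideanSpace ℝ (Fin d)) :
    lap d (fun x' => lapYrad d Ψ x' y) x
      + (inner ℝ (u x) (gradient (fun x' => lapYrad d Ψ x' y) x) : ℝ)
      + (inner ℝ (u y) (gradient (fun y' => lapXrad d Ψ x y') y) : ℝ)
      + ∑ i, ∑ j, u x i * mixedRad d Ψ x y i j * u y j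
    = 16 * (‖x - y‖ ^ 2) ^ 2 * deriv^[4] Ψ (‖x - y‖ ^ 2)
      + 16 * (2 + d) * ‖x - y‖ ^ 2 * deriv^[3] Ψ (‖x - y‖ ^ 2)
      + 4 * (2 + d) * d * deriv^[2] Ψ (‖x - y‖ ^ 2)
      + 4 * (2 * ‖x - y‖ ^ 2 * deriv^[3] Ψ (‖x - y‖ ^ 2)
          + (2 + d) * deriv^[2] Ψ (‖x - y‖ ^ 2)) * (inner ℝ (u x - u y) (x - y) : ℝ)
      - 4 * deriv^[2] Ψ (‖x - y‖ ^ 2)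
          * (inner ℝ (u x) (x - y) : ℝ) * (inner ℝ (x - y) (u y) : ℝ)
      - 2 * deriv Ψ (‖x - y‖ ^ 2) * (inner ℝ (u x) (u y) : ℝ) := by
  have hΨ₂ : ContDiff ℝ 2 Ψ := hΨ.of_le (by norm_num)
  have hL : ContDiff ℝ 2 (radialLapProfile d Ψ) := contDiff_radialLapProfile (n := 2) hΨ
  have hL₁ : Differentiable ℝ (radialLapProfile d Ψ) := hL.differentiable two_ne_zero
  have hY : (fun x' => lapYrad d Ψ x' y) = fun x' => radialLapProfile d Ψ (‖x' - y‖ ^ 2) :=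
    funext fun x' => lapYrad_eq hΨ₂ x' y
  have hX : (fun y' => lapXrad d Ψ x y') = fun y' => radialLapProfile d Ψ (‖y' - x‖ ^ 2) :=
    funext fun y' => by rw [lapXrad_eq hΨ₂, norm_sub_rev]
  rw [hY, hX, lap_radial hL, gradient_radial y (hL₁ _), gradient_radial x (hL₁ _),
    sum_sum_mul_mixedRad_mul hΨ₂, norm_sub_rev y x, ← neg_sub x y, radialLapProfile,
    iterate_deriv_two_radialLapProfile hΨ, deriv_radialLapProfile (hΨ.of_le (by norm_num))]
  simp only [inner_smul_right, inner_neg_right, inner_sub_left]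
  ring

/-- Lemma 5 of the paper: closed form of the Stein kernel `k₀`
for a radial base kernel `k(x,y) = Ψ(‖x-y‖²)`. -/
theorem stmt4 (d : ℕ) (Ψ : ℝ → ℝ) (hΨ : ContDiff ℝ 4 Ψ)
    (p : EuclideanSpace ℝ (Fin d) → ℝ) (hp : ∀ x, 0 < p x)
    (hlogp : ContDiff ℝ 1 fun x => Real.log (p x))
    (u : EuclideanSpace ℝ (Fin d) → EuclideanSpace ℝ (Fin d))
    (hu : ∀ x, u x = gradient (fun t => Real.log (p t)) x)
    (x y : EuclideanSpace ℝ (Fin d)) :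
    lap d (fun x' => lapYrad d Ψ x' y) x
      + (inner ℝ (u x) (gradient (fun x' => lapYrad d Ψ x' y) x) : ℝ)
      + (inner ℝ (u y) (gradient (fun y' => lapXrad d Ψ x y') y) : ℝ)
      + ∑ i, ∑ j, u x i * mixedRad d Ψ x y i j * u y j
    = 16 * (‖x - y‖ ^ 2) ^ 2 * deriv^[4] Ψ (‖x - y‖ ^ 2)
      + 16 * (2 + d) * ‖x - y‖ ^ 2 * deriv^[3] Ψ (‖x - y‖ ^ 2)
      + 4 * (2 + d) * d * deriv^[2] Ψ (‖x - y‖ ^ 2)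
      + 4 * (2 * ‖x - y‖ ^ 2 * deriv^[3] Ψ (‖x - y‖ ^ 2)
          + (2 + d) * deriv^[2] Ψ (‖x - y‖ ^ 2)) * (inner ℝ (u x - u y) (x - y) : ℝ)
      - 4 * deriv^[2] Ψ (‖x - y‖ ^ 2)
          * (inner ℝ (u x) (x - y) : ℝ) * (inner ℝ (x - y) (u y) : ℝ)
      - 2 * deriv Ψ (‖x - y‖ ^ 2) * (inner ℝ (u x) (u y) : ℝ) :=
  stmt4_general d Ψ hΨ u x y
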